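/- arXiv:2005.08157 — 3 statements merged into one kernel-verified Lean document; each statement's English description precedes it below -/
import Mathlib

section
/- Let ω : [0,1] → ℝ be a continuous increasing function with ω(0) = 0 satisfying the Dini condition ∫₀^r ω(s)/s ds < ∞ for all r ∈ (0,1). Fix κ ∈ (0,1) and γ ∈ (0,1), and define ω̃(t) = ∑_{i=1}^∞ κ^{iγ}·(ω(κ^{-i}t) if κ^{-i}t ≤ 1, else ω(1)). Then ω̃ also satisfies the Dini condition: ∫₀^r ω̃(t)/t dt < ∞ for all r ∈ (0,1). -/
open MeasureTheory Set Filter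

/-!
On `(0, κⁱ]` the `i`-th summand of `ω̃(t)/t` is the Dini integrand `ω(s)/s` rescaled by
`s = κ⁻ⁱ t`, and `dt/t` is dilation invariant, so its absolute value integrates to
`∫₀¹ |ω(s)|/s ds`; on `(κⁱ, 1]` it is `ω(1)/t`, contributing `|ω(1)| · i log(1/κ)`.
Against the weights `κ^{iγ}` these bounds are summable, so the series may be integrated termwise.
-/

theorem integrable_tsum_of_summable_integral_norm {α E : Type*} [MeasurableSpace α]
    {μ : Measure α} [NormedAddCommGroup E] [CompleteSpace E] {F : ℕ → α → E}
    (hF_int : ∀ i, Integrable (F i) μ) (hF_sum : Summable fun i ↦ ∫ a, ‖F i a‖ ∂μ) :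
    Integrable (fun a ↦ ∑' i, F i a) μ := by
  have hF_meas i : AEMeasurable (fun a ↦ ‖F i a‖ₑ) μ := (hF_int i).1.enorm
  have hlint : ∫⁻ a, ∑' i, ‖F i a‖ₑ ∂μ ≠ ⊤ := by
    rw [lintegral_tsum hF_meas]
    simp_rw [← ofReal_integral_norm_eq_lintegral_enorm (hF_int _)]
    rw [← ENNReal.ofReal_tsum_of_nonneg (fun i ↦ integral_nonneg fun a ↦ norm_nonneg _) hF_sum]
    exact ENNReal.ofReal_ne_top
  have hsum : ∀ᵐ a ∂μ, Summable fun i ↦ ‖F i a‖ := by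
    filter_upwards [ae_lt_top' (AEMeasurable.tsum hF_meas) hlint] with a ha
    exact tsum_enorm_ne_top_iff_summable_norm.1 ha.ne
  refine ⟨aestronglyMeasurable_of_tendsto_ae atTop (f := fun n a ↦ ∑ i ∈ Finset.range n, F i a)
    (fun n ↦ Finset.aestronglyMeasurable_fun_sum _ fun i _ ↦ (hF_int i).1) ?_, ?_⟩
  · filter_upwards [hsum] with a ha using ha.of_norm.hasSum.tendsto_sum_nat
  · exact (lintegral_mono fun a ↦ enorm_tsum_le_tsum_enorm).trans_lt hlint.lt_top

theorem integrableOn_Ioc_of_integrableOn_Ioo_of_continuousOn {E : Type*} [NormedAddCommGroup E]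
    {f : ℝ → E} {a r b : ℝ}
    (hf : IntegrableOn f (Ioo a r)) (hcont : ContinuousOn f (Icc r b)) :
    IntegrableOn f (Ioc a b) := by
  refine (hf.union hcont.integrableOn_Icc).mono_set fun s hs ↦ ?_
  rcases lt_or_ge s r with h | h
  · exact Or.inl ⟨hs.1, h⟩
  · exact Or.inr ⟨h, hs.2⟩

theorem summable_rpow_mul_affine {q γ : ℝ} (hq0 : 0 < q) (hq1 : q < 1) (hγ : 0 < γ) (A B : ℝ) :
    Summable fun i : ℕ ↦ q ^ (((i : ℝ) + 1) * γ) * (A + B * ((i : ℝ) + 1)) := by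
  set ρ := q ^ γ
  have hρ : ‖ρ‖ < 1 := by
    rw [Real.norm_of_nonneg (Real.rpow_nonneg hq0.le γ)]
    exact Real.rpow_lt_one hq0.le hq1 hγ
  have hsum : Summable fun n : ℕ ↦ ρ ^ n * (A + B * n) := by
    have hgeom := (summable_geometric_of_norm_lt_one hρ).mul_left A
    have hpoly := (summable_pow_mul_geometric_of_norm_lt_one 1 hρ).mul_left B
    refine (hgeom.add hpoly).congr fun n ↦ ?_
    simp only [pow_one]
    ring
  refine ((summable_nat_add_iff 1).2 hsum).congr fun i ↦ ?_
  rw [mul_comm _ γ, Real.rpow_mul hq0.le, ← Nat.cast_add_one, Real.rpow_natCast]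

noncomputable def dilateCapped (φ : ℝ → ℝ) (a t : ℝ) : ℝ := if a * t ≤ 1 then φ (a * t) else φ 1

section dilateCapped

variable {φ : ℝ → ℝ} {a : ℝ}

theorem norm_dilateCapped (t : ℝ) : ‖dilateCapped φ a t‖ = dilateCapped (‖φ ·‖) a t := by
  unfold dilateCapped
  split_ifs <;> rfl

theorem dilateCapped_div_eqOn_Icc (ha : 0 < a) :
    EqOn (fun t ↦ dilateCapped φ a t / t) (fun t ↦ a * (φ (a * t) / (a * t))) (Icc 0 a⁻¹) := by
  intro t ht
  have hat : a * t ≤ 1 := by simpa [ha.ne'] using mul_le_mul_of_nonneg_left ht.2 ha.le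
  simp only [dilateCapped, if_pos hat]
  rcases ht.1.eq_or_lt with rfl | ht0
  · simp
  · field_simp

theorem dilateCapped_div_eqOn_Ici (ha : 0 < a) :
    EqOn (fun t ↦ dilateCapped φ a t / t) (fun t ↦ φ 1 / t) (Ici a⁻¹) := by
  intro t ht
  have hat : 1 ≤ a * t := by simpa [ha.ne'] using mul_le_mul_of_nonneg_left (mem_Ici.1 ht) ha.le
  simp only [dilateCapped]
  split_ifs with h
  · rw [le_antisymm h hat]
  · rfl


theorem intervalIntegrable_dilateCapped_div_zero_inv
    (hφ : IntervalIntegrable (fun s ↦ φ s / s) volume 0 1) (ha : 0 < a) :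
    IntervalIntegrable (fun t ↦ dilateCapped φ a t / t) volume 0 a⁻¹ := by
  have hscaled : IntervalIntegrable (fun t ↦ a * (φ (a * t) / (a * t))) volume 0 a⁻¹ := by
    simpa using (hφ.comp_mul_left (c := a)).const_mul a
  refine hscaled.congr fun t ht ↦ ?_
  rw [uIoc_of_le (inv_pos.2 ha).le] at ht
  exact (dilateCapped_div_eqOn_Icc ha (Ioc_subset_Icc_self ht)).symm

theorem intervalIntegrable_dilateCapped_div_inv_one (ha : 1 ≤ a) :
    IntervalIntegrable (fun t ↦ dilateCapped φ a t / t) volume a⁻¹ 1 := by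
  have ha0 : 0 < a := one_pos.trans_le ha
  have hinv : IntervalIntegrable (fun t ↦ φ 1 / t) volume a⁻¹ 1 := by
    refine (continuousOn_const.div continuousOn_id fun t ht ↦ ?_).intervalIntegrable
    rw [uIcc_of_le (inv_le_one_of_one_le₀ ha)] at ht
    exact ((inv_pos.2 ha0).trans_le ht.1).ne'
  refine hinv.congr fun t ht ↦ ?_
  rw [uIoc_of_le (inv_le_one_of_one_le₀ ha)] at ht
  exact (dilateCapped_div_eqOn_Ici ha0 ht.1.le).symm

theorem integral_dilateCapped_div (hφ : IntervalIntegrable (fun s ↦ φ s / s) volume 0 1)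
    (ha : 1 ≤ a) :
    ∫ t in 0..1, dilateCapped φ a t / t = (∫ s in 0..1, φ s / s) + φ 1 * Real.log a := by
  have ha0 : 0 < a := one_pos.trans_le ha
  have hinv : 0 < a⁻¹ := inv_pos.2 ha0
  rw [← intervalIntegral.integral_add_adjacent_intervals
      (intervalIntegrable_dilateCapped_div_zero_inv hφ ha0)
      (intervalIntegrable_dilateCapped_div_inv_one ha),
    intervalIntegral.integral_congr ((dilateCapped_div_eqOn_Icc ha0).mono (uIcc_of_le hinv.le).subset),
    intervalIntegral.integral_congr ((dilateCapped_div_eqOn_Ici ha0).mono fun t ht ↦ ?_)]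
  · have hleft : ∫ t in 0..a⁻¹, a * (φ (a * t) / (a * t)) = ∫ s in 0..1, φ s / s := by
      rw [intervalIntegral.integral_const_mul,
        intervalIntegral.mul_integral_comp_mul_left (f := fun s ↦ φ s / s), mul_zero,
        mul_inv_cancel₀ ha0.ne']
    have hright : ∫ t in a⁻¹..1, φ 1 / t = φ 1 * Real.log a := by
      simp_rw [div_eq_mul_inv (φ 1)]
      rw [intervalIntegral.integral_const_mul, integral_inv_of_pos hinv one_pos, one_div, inv_inv]
    rw [hleft, hright]
  · rw [uIcc_of_le (inv_le_one_of_one_le₀ ha)] at ht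
    exact ht.1

theorem intervalIntegrable_dilateCapped_div
    (hφ : IntervalIntegrable (fun s ↦ φ s / s) volume 0 1) (ha : 1 ≤ a) :
    IntervalIntegrable (fun t ↦ dilateCapped φ a t / t) volume 0 1 :=
  (intervalIntegrable_dilateCapped_div_zero_inv hφ (one_pos.trans_le ha)).trans
    (intervalIntegrable_dilateCapped_div_inv_one ha)

theorem integral_norm_dilateCapped_div (hφ : IntervalIntegrable (fun s ↦ φ s / s) volume 0 1)
    (ha : 1 ≤ a) :
    ∫ t in 0..1, ‖dilateCapped φ a t / t‖ = (∫ s in 0..1, ‖φ s‖ / s) + ‖φ 1‖ * Real.log a := by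
  have hnorm (ψ : ℝ → ℝ) : EqOn (fun t ↦ ‖ψ t / t‖) (fun t ↦ ‖ψ t‖ / t) (uIcc 0 1) :=
    fun t ht ↦ by
      rw [uIcc_of_le zero_le_one] at ht
      simp only [norm_div, Real.norm_of_nonneg ht.1]
  have hφ_norm : IntervalIntegrable (fun s ↦ ‖φ s‖ / s) volume 0 1 :=
    hφ.norm.congr fun s hs ↦ hnorm φ (uIoc_subset_uIcc hs)
  rw [intervalIntegral.integral_congr (hnorm _)]
  simp_rw [norm_dilateCapped]
  exact integral_dilateCapped_div hφ_norm ha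

end dilateCapped

theorem stmt1_general (ω : ℝ → ℝ) (hcont : ContinuousOn ω (Set.Icc 0 1))
    (hDini : ∀ r ∈ Set.Ioo (0:ℝ) 1, IntegrableOn (fun s => ω s / s) (Set.Ioo 0 r))
    (κ γ : ℝ) (hκ : κ ∈ Set.Ioo (0:ℝ) 1) (hγ : γ ∈ Set.Ioo (0:ℝ) 1) :
    ∀ r ∈ Set.Ioo (0:ℝ) 1,
      IntegrableOn
        (fun t => (∑' i : ℕ, κ ^ (((i:ℝ) + 1) * γ) *
          (if κ ^ (-((i:ℝ) + 1)) * t ≤ 1 then ω (κ ^ (-((i:ℝ) + 1)) * t) else ω 1)) / t)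
        (Set.Ioo 0 r) := by
  obtain ⟨hκ0, hκ1⟩ := hκ
  intro r hr
  set a : ℕ → ℝ := fun i ↦ κ ^ (-((i : ℝ) + 1))
  have ha i : 1 ≤ a i :=
    Real.one_le_rpow_of_pos_of_le_one_of_nonpos hκ0 hκ1.le (by linarith [i.cast_nonneg (α := ℝ)])
  have hlog_a i : Real.log (a i) = -Real.log κ * ((i : ℝ) + 1) := by
    simp only [a, Real.log_rpow hκ0]
    ring
  have hω : IntervalIntegrable (fun s ↦ ω s / s) volume 0 1 := by
    rw [intervalIntegrable_iff_integrableOn_Ioc_of_le zero_le_one]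
    refine integrableOn_Ioc_of_integrableOn_Ioo_of_continuousOn
      (hDini (1 / 2) ⟨by norm_num, by norm_num⟩) ?_
    refine (hcont.mono (Icc_subset_Icc (by norm_num) le_rfl)).div continuousOn_id fun s hs ↦ ?_
    exact (lt_of_lt_of_le (by norm_num) hs.1).ne'
  set F : ℕ → ℝ → ℝ := fun i t ↦ κ ^ (((i : ℝ) + 1) * γ) * (dilateCapped ω (a i) t / t)
  have hF_int i : IntegrableOn (F i) (Ioc 0 1) := by
    rw [← intervalIntegrable_iff_integrableOn_Ioc_of_le zero_le_one]
    exact (intervalIntegrable_dilateCapped_div hω (ha i)).const_mul _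
  have hF_norm i : ∫ t in Ioc 0 1, ‖F i t‖ = κ ^ (((i : ℝ) + 1) * γ) *
      ((∫ s in 0..1, ‖ω s‖ / s) + ‖ω 1‖ * -Real.log κ * ((i : ℝ) + 1)) := by
    rw [← intervalIntegral.integral_of_le zero_le_one]
    simp only [F, norm_mul, Real.norm_of_nonneg (Real.rpow_nonneg hκ0.le _)]
    rw [intervalIntegral.integral_const_mul, integral_norm_dilateCapped_div hω (ha i), hlog_a]
    ring
  have hsum : IntegrableOn (fun t ↦ ∑' i, F i t) (Ioc 0 1) := by
    refine integrable_tsum_of_summable_integral_norm hF_int ?_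
    simp_rw [hF_norm]
    exact summable_rpow_mul_affine hκ0 hκ1 hγ.1 _ _
  refine (hsum.mono_set (Ioo_subset_Ioc_self.trans (Ioc_subset_Ioc_right hr.2.le))).congr_fun
    (fun t _ ↦ ?_) measurableSet_Ioo
  simp only [F, a, dilateCapped, ← mul_div_assoc, tsum_div_const]

/-- If ω satisfies the Dini condition, then so does the derived modulus ω̃. -/
theorem stmt1 (ω : ℝ → ℝ) (hcont : ContinuousOn ω (Set.Icc 0 1))
    (hmono : MonotoneOn ω (Set.Icc 0 1)) (h0 : ω 0 = 0)
    (hDini : ∀ r ∈ Set.Ioo (0:ℝ) 1, IntegrableOn (fun s => ω s / s) (Set.Ioo 0 r))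
    (κ γ : ℝ) (hκ : κ ∈ Set.Ioo (0:ℝ) 1) (hγ : γ ∈ Set.Ioo (0:ℝ) 1) :
    ∀ r ∈ Set.Ioo (0:ℝ) 1,
      IntegrableOn
        (fun t => (∑' i : ℕ, κ ^ (((i:ℝ) + 1) * γ) *
          (if κ ^ (-((i:ℝ) + 1)) * t ≤ 1 then ω (κ ^ (-((i:ℝ) + 1)) * t) else ω 1)) / t)
        (Set.Ioo 0 r) :=
  stmt1_general ω hcont hDini κ γ hκ hγ
end

section
/- Let q ∈ (0,1), r > 0, ν ∈ (0,1], and let a : ℝ → ℝ be a measurable function with ν ≤ a(s) ≤ ν^{-1} for all s. Let p : ℝᵈ → ℝ be given by p(x) = ℓ₀ + ∑_{β=1}^{d−1} ℓ_β x^β + ∫₀^{xᵈ} a(s)^{-1}·(ℓ_d − ∑_{β=1}^{d−1} b_β(s) ℓ_β) ds, where b_β : ℝ → ℝ are measurable with |b_β(s)| ≤ ν^{-1}. Suppose ⨍_{B_r(0)} |p(x)|^q dx ≤ C₀^q·r^{q(1+δ)} for constants C₀ ≥ 0, δ > 0. Then there exists N depending only on d, q, ν, δ such that |ℓ₀| ≤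 N·C₀·r^{1+δ} and |ℓ_β| ≤ N·C₀·r^{δ} for all β = 1, …, d. -/
/-!
Reflecting one coordinate `x_i ↦ -x_i` preserves the ball `B = B_r(0)` and Lebesgue measure,
so, since `|u - v|^q ≤ |u|^q + |v|^q` for `q ≤ 1`, the hypothesis gives
`⨍_B |p - p ∘ σ_i|^q ≤ 2 ε^q` with `ε = C₀ r^(1+δ)`. On the ball of radius `r/4` around
`(r/2) e_i`, which carries the fixed fraction `4^(-d)` of the volume of `B` and on which
`x_i > r/4`, the difference `p - p ∘ σ_i` is `2 ℓ_β x_β` when `i = β < d`, and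
`∫_{-x_d}^{x_d} a⁻¹ (ℓ_d - ∑ b_β ℓ_β)` when `i = d`; by ellipticity the latter is at least
`2 x_d (ν |ℓ_d| - ν⁻² ∑ |ℓ_β|)`. A Chebyshev argument (`K ≤ |h| + D` on `A` and
`⨍_A |h|^q ≤ E^q` force `K ≤ D + E`) turns these into `|ℓ_β| ≲ C₀ r^δ` and then
`|ℓ_d| ≲ C₀ r^δ`. Finally `|ℓ₀| ≤ |p x| + r (∑ |ℓ_β| + sup |∂_d p|)` on `B` bounds `ℓ₀`.
-/

open MeasureTheory Set Metric Module

section SetAverage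

variable {α : Type*} [MeasurableSpace α] {μ : Measure α} {A : Set α}

lemma le_setAverage_of_forall_le {g : α → ℝ} {c : ℝ} (hA : MeasurableSet A) (hA₀ : μ A ≠ 0)
    (hA_top : μ A ≠ ⊤) (hg : IntegrableOn g A μ) (hc : ∀ x ∈ A, c ≤ g x) :
    c ≤ ⨍ x in A, g x ∂μ := by
  rw [setAverage_eq, smul_eq_mul]
  exact (le_inv_mul_iff₀' (ENNReal.toReal_pos hA₀ hA_top)).2
    (setIntegral_ge_of_const_le_real hA hA_top hc hg)

lemma le_add_of_setAverage_rpow_le {h : α → ℝ} {q K D E : ℝ} (hA : MeasurableSet A)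
    (hA₀ : μ A ≠ 0) (hA_top : μ A ≠ ⊤) (hq : 0 < q) (hE : 0 ≤ E)
    (hh : IntegrableOn (fun x ↦ |h x| ^ q) A μ) (hK : ∀ x ∈ A, K ≤ |h x| + D)
    (havg : ⨍ x in A, |h x| ^ q ∂μ ≤ E ^ q) :
    K ≤ D + E := by
  rcases le_or_gt K D with hKD | hDK
  · linarith
  have hKD : (K - D) ^ q ≤ E ^ q :=
    (le_setAverage_of_forall_le hA hA₀ hA_top hh fun x hx ↦
      Real.rpow_le_rpow (by linarith) (by linarith [hK x hx]) hq.le).trans havg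
  linarith [(Real.rpow_le_rpow_iff (by linarith) hE hq).1 hKD]

end SetAverage

section Balls

variable {E : Type*} [NormedAddCommGroup E] [NormedSpace ℝ E] [FiniteDimensional ℝ E]
  [MeasurableSpace E] [BorelSpace E] (μ : Measure E) [μ.IsAddHaarMeasure]

lemma setAverage_ball_le_of_subset {g : E → ℝ} (hg₀ : ∀ x, 0 ≤ g x) {r ρ : ℝ} {c : E}
    (hg : IntegrableOn g (ball 0 r) μ) (hρ : 0 < ρ) (hsub : ball c ρ ⊆ ball 0 r) :
    ⨍ x in ball c ρ, g x ∂μ ≤ (r / ρ) ^ finrank ℝ E * ⨍ x in ball 0 r, g x ∂μ := by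
  have hr : 0 < r := by simpa using dist_nonneg.trans_lt (hsub (mem_ball_self hρ))
  have hscale := Measure.addHaar_ball_mul_of_pos μ (0 : E) (div_pos hr hρ) ρ
  rw [div_mul_cancel₀ r hρ.ne'] at hscale
  have hvol : μ.real (ball 0 r) = (r / ρ) ^ finrank ℝ E * μ.real (ball c ρ) := by
    rw [Measure.addHaar_real_ball_center μ c, measureReal_def, measureReal_def, hscale,
      ENNReal.toReal_mul, ENNReal.toReal_ofReal (by positivity)]
  rw [setAverage_eq, setAverage_eq, smul_eq_mul, smul_eq_mul, hvol, mul_inv, ← mul_assoc,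
    ← mul_assoc, mul_inv_cancel₀ (by positivity), one_mul]
  exact mul_le_mul_of_nonneg_left
    (setIntegral_mono_set hg (ae_of_all _ fun x ↦ hg₀ x) hsub.eventuallyLE) (by positivity)

end Balls

lemma Continuous.integrableOn_ball_abs_rpow {E : Type*} [NormedAddCommGroup E] [ProperSpace E]
    [MeasurableSpace E] [OpensMeasurableSpace E] {μ : Measure E} [IsFiniteMeasureOnCompacts μ]
    {g : E → ℝ} (hg : Continuous g) {q : ℝ} (hq : 0 ≤ q) (c : E) (r : ℝ) :
    IntegrableOn (fun x ↦ |g x| ^ q) (ball c r) μ :=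
  ((hg.abs.rpow_const fun _ ↦ Or.inr hq).continuousOn.integrableOn_compact
    (isCompact_closedBall c r)).mono_set ball_subset_closedBall

section Reflection

variable {E : Type*} [NormedAddCommGroup E] [InnerProductSpace ℝ E] [FiniteDimensional ℝ E]
  [MeasurableSpace E] [BorelSpace E] (σ : E ≃ₗᵢ[ℝ] E) {g : E → ℝ} {q : ℝ}

lemma setIntegral_ball_abs_sub_comp_rpow_le (hg : Continuous g) (hq₀ : 0 ≤ q) (hq₁ : q ≤ 1)
    (r : ℝ) : ∫ x in ball 0 r, |g x - g (σ x)| ^ q ≤ 2 * ∫ x in ball 0 r, |g x| ^ q := by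
  have hgσ : ∫ x in ball 0 r, |g (σ x)| ^ q = ∫ x in ball 0 r, |g x| ^ q := by
    have h := σ.measurePreserving.setIntegral_preimage_emb
      σ.toHomeomorph.measurableEmbedding (fun y ↦ |g y| ^ q) (ball 0 r)
    rwa [σ.preimage_ball, map_zero] at h
  have hI := hg.integrableOn_ball_abs_rpow (μ := volume) hq₀ 0 r
  have hIσ : IntegrableOn (fun x ↦ |g (σ x)| ^ q) (ball 0 r) :=
    (hg.comp σ.continuous).integrableOn_ball_abs_rpow hq₀ 0 r
  calc ∫ x in ball 0 r, |g x - g (σ x)| ^ q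
      ≤ ∫ x in ball 0 r, (|g x| ^ q + |g (σ x)| ^ q) :=
        setIntegral_mono ((hg.sub (hg.comp σ.continuous)).integrableOn_ball_abs_rpow hq₀ 0 r)
          (hI.add hIσ) fun x ↦ (Real.rpow_le_rpow (abs_nonneg _) (abs_sub _ _) hq₀).trans
            (Real.rpow_add_le_add_rpow (abs_nonneg _) (abs_nonneg _) hq₀ hq₁)
    _ = 2 * ∫ x in ball 0 r, |g x| ^ q := by rw [integral_add hI hIσ, hgσ]; ring

lemma setAverage_ball_abs_sub_comp_rpow_le (hg : Continuous g) (hq₀ : 0 ≤ q) (hq₁ : q ≤ 1)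
    (r : ℝ) : ⨍ x in ball 0 r, |g x - g (σ x)| ^ q ≤ 2 * ⨍ x in ball 0 r, |g x| ^ q := by
  simp only [setAverage_eq, smul_eq_mul]
  rw [mul_left_comm]
  exact mul_le_mul_of_nonneg_left (setIntegral_ball_abs_sub_comp_rpow_le σ hg hq₀ hq₁ r)
    (by positivity)

lemma le_add_of_setAverage_ball_rpow_le (hg : Continuous g) {r ε K D : ℝ} (hq₀ : 0 < q)
    (hq₁ : q ≤ 1) (hr : 0 < r) (hε : 0 ≤ ε) (havg : ⨍ x in ball 0 r, |g x| ^ q ≤ ε ^ q)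
    {c : E} (hc : ‖c‖ = r / 2) (hK : ∀ x ∈ ball c (r / 4), K ≤ |g x - g (σ x)| + D) :
    K ≤ D + (2 * 4 ^ finrank ℝ E) ^ q⁻¹ * ε := by
  have hsub : ball c (r / 4) ⊆ ball 0 r :=
    ball_subset_ball' (by rw [dist_zero_right, hc]; linarith)
  have hgσ : Continuous fun x ↦ g x - g (σ x) := hg.sub (hg.comp σ.continuous)
  refine le_add_of_setAverage_rpow_le measurableSet_ball
    (measure_ball_pos _ _ (by positivity)).ne' measure_ball_lt_top.ne hq₀ (by positivity)
    (hgσ.integrableOn_ball_abs_rpow (μ := volume) hq₀.le _ _) hK ?_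
  calc ⨍ x in ball c (r / 4), |g x - g (σ x)| ^ q
      ≤ (r / (r / 4)) ^ finrank ℝ E * ⨍ x in ball 0 r, |g x - g (σ x)| ^ q :=
        setAverage_ball_le_of_subset volume (fun _ ↦ by positivity)
          (hgσ.integrableOn_ball_abs_rpow hq₀.le _ _) (by positivity) hsub
    _ ≤ 4 ^ finrank ℝ E * (2 * ε ^ q) := by
        rw [show r / (r / 4) = 4 by field_simp]
        gcongr
        exact (setAverage_ball_abs_sub_comp_rpow_le σ hg hq₀.le hq₁ r).trans (by linarith)
    _ = ((2 * 4 ^ finrank ℝ E) ^ q⁻¹ * ε) ^ q := by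
        rw [Real.mul_rpow (by positivity) hε, ← Real.rpow_mul (by positivity),
          inv_mul_cancel₀ hq₀.ne', Real.rpow_one]
        ring

end Reflection

section CoordReflection

variable {ι : Type*} [Fintype ι] [DecidableEq ι]

noncomputable def coordReflection (i : ι) : EuclideanSpace ℝ ι ≃ₗᵢ[ℝ] EuclideanSpace ℝ ι :=
  LinearIsometryEquiv.piLpCongrRight 2 fun j ↦
    if j = i then LinearIsometryEquiv.neg ℝ else LinearIsometryEquiv.refl ℝ ℝ

@[simp]
lemma coordReflection_apply (i : ι) (x : EuclideanSpace ℝ ι) (j : ι) :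
    coordReflection i x j = if j = i then -x j else x j := by
  simp [coordReflection, apply_ite (fun e : ℝ ≃ₗᵢ[ℝ] ℝ ↦ e (x j))]

lemma apply_mem_Ioo_of_mem_ball_single {i : ι} {s ρ : ℝ} {x : EuclideanSpace ℝ ι}
    (hx : x ∈ ball (EuclideanSpace.single i s) ρ) : x i ∈ Ioo (s - ρ) (s + ρ) := by
  have h := (PiLp.norm_apply_le (x - EuclideanSpace.single i s) i).trans_lt
    (mem_ball_iff_norm.1 hx)
  simp only [PiLp.sub_apply, PiLp.single_apply, if_true, Real.norm_eq_abs, abs_lt] at h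
  constructor <;> linarith [h.1, h.2]

end CoordReflection

structure EllipticCoeffs {ι : Type*} (ν : ℝ) (a : ℝ → ℝ) (b : ι → ℝ → ℝ) : Prop where
  pos : 0 < ν
  measurable_a : Measurable a
  measurable_b : ∀ β, Measurable (b β)
  le_a : ∀ s, ν ≤ a s
  a_le : ∀ s, a s ≤ ν⁻¹
  abs_b_le : ∀ β s, |b β s| ≤ ν⁻¹

lemma Measurable.intervalIntegrable_of_abs_le {f : ℝ → ℝ} (hf : Measurable f) {C : ℝ}
    (hC : ∀ s, |f s| ≤ C) (u v : ℝ) : IntervalIntegrable f volume u v := by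
  constructor <;>
    exact Measure.integrableOn_of_bounded measure_Ioc_lt_top.ne hf.aestronglyMeasurable
      (ae_of_all _ hC)

noncomputable def layerSlope {ι : Type*} [Fintype ι] (a : ℝ → ℝ) (b : ι → ℝ → ℝ) (ℓd : ℝ)
    (ℓ : ι → ℝ) (s : ℝ) : ℝ :=
  (a s)⁻¹ * (ℓd - ∑ β, b β s * ℓ β)

namespace EllipticCoeffs

variable {ι : Type*} {ν : ℝ} {a : ℝ → ℝ} {b : ι → ℝ → ℝ}

lemma inv_a_mem_Icc (hc : EllipticCoeffs ν a b) (s : ℝ) : (a s)⁻¹ ∈ Icc ν ν⁻¹ :=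
  ⟨by simpa using inv_anti₀ (hc.pos.trans_le (hc.le_a s)) (hc.a_le s),
    inv_anti₀ hc.pos (hc.le_a s)⟩

lemma abs_inv_a_le (hc : EllipticCoeffs ν a b) (s : ℝ) : |(a s)⁻¹| ≤ ν⁻¹ :=
  (abs_of_pos (hc.pos.trans_le (hc.inv_a_mem_Icc s).1)).trans_le (hc.inv_a_mem_Icc s).2

variable [Fintype ι]

lemma abs_sum_mul_le (hc : EllipticCoeffs ν a b) (ℓ : ι → ℝ) (s : ℝ) :
    |∑ β, b β s * ℓ β| ≤ ν⁻¹ * ∑ β, |ℓ β| := by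
  rw [Finset.mul_sum]
  refine (Finset.abs_sum_le_sum_abs _ _).trans (Finset.sum_le_sum fun β _ ↦ ?_)
  rw [abs_mul]
  exact mul_le_mul_of_nonneg_right (hc.abs_b_le β s) (abs_nonneg _)

lemma abs_inv_a_mul_sum_le (hc : EllipticCoeffs ν a b) (ℓ : ι → ℝ) (s : ℝ) :
    |(a s)⁻¹ * ∑ β, b β s * ℓ β| ≤ ν⁻¹ * (ν⁻¹ * ∑ β, |ℓ β|) := by
  rw [abs_mul]
  exact mul_le_mul (hc.abs_inv_a_le s) (hc.abs_sum_mul_le ℓ s) (abs_nonneg _)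
    (inv_pos.2 hc.pos).le

lemma abs_layerSlope_le (hc : EllipticCoeffs ν a b) (ℓd : ℝ) (ℓ : ι → ℝ) (s : ℝ) :
    |layerSlope a b ℓd ℓ s| ≤ ν⁻¹ * (|ℓd| + ν⁻¹ * ∑ β, |ℓ β|) := by
  rw [layerSlope, abs_mul]
  exact mul_le_mul (hc.abs_inv_a_le s)
    ((abs_sub _ _).trans (by gcongr; exact hc.abs_sum_mul_le ℓ s)) (abs_nonneg _)
    (inv_pos.2 hc.pos).le

lemma measurable_sum_mul (hc : EllipticCoeffs ν a b) (ℓ : ι → ℝ) :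
    Measurable fun s ↦ ∑ β, b β s * ℓ β :=
  Finset.measurable_sum _ fun β _ ↦ (hc.measurable_b β).mul_const _

lemma intervalIntegrable_layerSlope (hc : EllipticCoeffs ν a b) (ℓd : ℝ) (ℓ : ι → ℝ)
    (u v : ℝ) : IntervalIntegrable (layerSlope a b ℓd ℓ) volume u v :=
  (hc.measurable_a.inv.mul (measurable_const.sub (hc.measurable_sum_mul ℓ))
    ).intervalIntegrable_of_abs_le (hc.abs_layerSlope_le ℓd ℓ) u v

lemma sub_mul_abs_le_abs_integral_layerSlope (hc : EllipticCoeffs ν a b) (ℓd : ℝ)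
    (ℓ : ι → ℝ) {u v : ℝ} (huv : u ≤ v) :
    (v - u) * ν * |ℓd| ≤
      |∫ s in u..v, layerSlope a b ℓd ℓ s| + (v - u) * (ν⁻¹ * (ν⁻¹ * ∑ β, |ℓ β|)) := by
  have hw : IntervalIntegrable (fun s ↦ (a s)⁻¹) volume u v :=
    hc.measurable_a.inv.intervalIntegrable_of_abs_le hc.abs_inv_a_le u v
  have hJ : IntervalIntegrable (fun s ↦ (a s)⁻¹ * ∑ β, b β s * ℓ β) volume u v :=
    (hc.measurable_a.inv.mul (hc.measurable_sum_mul ℓ)).intervalIntegrable_of_abs_le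
    (hc.abs_inv_a_mul_sum_le ℓ) u v
  have hsplit : ∫ s in u..v, layerSlope a b ℓd ℓ s =
      (∫ s in u..v, (a s)⁻¹) * ℓd - ∫ s in u..v, (a s)⁻¹ * ∑ β, b β s * ℓ β := by
    rw [← intervalIntegral.integral_mul_const, ← intervalIntegral.integral_sub (hw.mul_const _) hJ]
    simp only [layerSlope, mul_sub]
  have hlow : (v - u) * ν ≤ ∫ s in u..v, (a s)⁻¹ := by
    simpa [mul_comm] using intervalIntegral.integral_mono_on huv intervalIntegrable_const hw
      fun s _ ↦ (hc.inv_a_mem_Icc s).1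
  have hup : |∫ s in u..v, (a s)⁻¹ * ∑ β, b β s * ℓ β| ≤
      (v - u) * (ν⁻¹ * (ν⁻¹ * ∑ β, |ℓ β|)) := by
    simpa [abs_of_nonneg (sub_nonneg.2 huv), mul_comm] using
      intervalIntegral.norm_integral_le_of_norm_le_const
        (a := u) (b := v) (f := fun s ↦ (a s)⁻¹ * ∑ β, b β s * ℓ β)
        fun s _ ↦ hc.abs_inv_a_mul_sum_le ℓ s
  calc (v - u) * ν * |ℓd| ≤ |(∫ s in u..v, (a s)⁻¹) * ℓd| := by
        rw [abs_mul, abs_of_nonneg ((mul_nonneg (sub_nonneg.2 huv) hc.pos.le).trans hlow)]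
        gcongr
    _ ≤ _ := by
        rw [hsplit]
        linarith [abs_sub_abs_le_abs_sub ((∫ s in u..v, (a s)⁻¹) * ℓd)
          (∫ s in u..v, (a s)⁻¹ * ∑ β, b β s * ℓ β)]

end EllipticCoeffs

/-- The function `p` of the statement; `layerSlope` is its derivative `∂_d p`. -/
noncomputable def layerAffine {m : ℕ} (a : ℝ → ℝ) (b : Fin m → ℝ → ℝ) (ℓ₀ ℓd : ℝ)
    (ℓ : Fin m → ℝ) (x : EuclideanSpace ℝ (Fin (m + 1))) : ℝ :=
  ℓ₀ + ∑ β, ℓ β * x β.castSucc + ∫ s in 0..x (Fin.last m), layerSlope a b ℓd ℓ s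

section LayerAffine

variable {m : ℕ} {ν : ℝ} {a : ℝ → ℝ} {b : Fin m → ℝ → ℝ} (ℓ₀ ℓd : ℝ) (ℓ : Fin m → ℝ)

lemma layerAffine_sub_coordReflection_castSucc (β : Fin m)
    (x : EuclideanSpace ℝ (Fin (m + 1))) :
    layerAffine a b ℓ₀ ℓd ℓ x - layerAffine a b ℓ₀ ℓd ℓ (coordReflection β.castSucc x) =
      2 * ℓ β * x β.castSucc := by
  simp only [layerAffine, coordReflection_apply, if_neg (Fin.castSucc_lt_last β).ne',
    Fin.castSucc_inj]
  have hterm : ∀ γ, (ℓ γ * if γ = β then -x γ.castSucc else x γ.castSucc) =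
      ℓ γ * x γ.castSucc - if γ = β then 2 * ℓ γ * x γ.castSucc else 0 := by
    intro γ
    split_ifs <;> ring
  simp only [hterm, Finset.sum_sub_distrib, Finset.sum_ite_eq', Finset.mem_univ, if_true]
  ring

lemma EllipticCoeffs.layerAffine_sub_coordReflection_last (hc : EllipticCoeffs ν a b)
    (x : EuclideanSpace ℝ (Fin (m + 1))) :
    layerAffine a b ℓ₀ ℓd ℓ x - layerAffine a b ℓ₀ ℓd ℓ (coordReflection (Fin.last m) x) =
      ∫ s in -x (Fin.last m)..x (Fin.last m), layerSlope a b ℓd ℓ s := by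
  simp only [layerAffine, coordReflection_apply, if_true, (Fin.castSucc_lt_last _).ne, if_false]
  rw [← intervalIntegral.integral_interval_sub_left
    (hc.intervalIntegrable_layerSlope ℓd ℓ 0 (x (Fin.last m)))
    (hc.intervalIntegrable_layerSlope ℓd ℓ 0 (-x (Fin.last m)))]
  ring

lemma EllipticCoeffs.continuous_layerAffine (hc : EllipticCoeffs ν a b) :
    Continuous (layerAffine a b ℓ₀ ℓd ℓ) := by
  have := intervalIntegral.continuous_primitive (hc.intervalIntegrable_layerSlope ℓd ℓ) 0
  unfold layerAffine
  fun_prop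

lemma EllipticCoeffs.abs_le_abs_layerAffine_add (hc : EllipticCoeffs ν a b)
    (x : EuclideanSpace ℝ (Fin (m + 1))) :
    |ℓ₀| ≤ |layerAffine a b ℓ₀ ℓd ℓ x| +
      ‖x‖ * (∑ β, |ℓ β| + ν⁻¹ * (|ℓd| + ν⁻¹ * ∑ β, |ℓ β|)) := by
  have hlin : |∑ β, ℓ β * x β.castSucc| ≤ (∑ β, |ℓ β|) * ‖x‖ := by
    rw [Finset.sum_mul]
    refine (Finset.abs_sum_le_sum_abs _ _).trans (Finset.sum_le_sum fun β _ ↦ ?_)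
    rw [abs_mul]
    exact mul_le_mul_of_nonneg_left (PiLp.norm_apply_le x _) (abs_nonneg _)
  have hint : |∫ s in 0..x (Fin.last m), layerSlope a b ℓd ℓ s| ≤
      ‖x‖ * (ν⁻¹ * (|ℓd| + ν⁻¹ * ∑ β, |ℓ β|)) := by
    refine (intervalIntegral.norm_integral_le_of_norm_le_const (f := layerSlope a b ℓd ℓ)
      fun s _ ↦ hc.abs_layerSlope_le ℓd ℓ s).trans ?_
    rw [sub_zero, mul_comm]
    exact mul_le_mul_of_nonneg_right (PiLp.norm_apply_le x _)
      ((abs_nonneg _).trans (hc.abs_layerSlope_le ℓd ℓ 0))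
  have hdecomp : ℓ₀ = layerAffine a b ℓ₀ ℓd ℓ x - ∑ β, ℓ β * x β.castSucc -
      ∫ s in 0..x (Fin.last m), layerSlope a b ℓd ℓ s := by
    simp only [layerAffine]
    ring
  calc |ℓ₀| ≤ |layerAffine a b ℓ₀ ℓd ℓ x| + |∑ β, ℓ β * x β.castSucc| +
        |∫ s in 0..x (Fin.last m), layerSlope a b ℓd ℓ s| := by
        nth_rw 1 [hdecomp]
        exact (abs_sub _ _).trans (by gcongr; exact abs_sub _ _)
    _ ≤ _ := by linarith

end LayerAffine

noncomputable def slopeConst (m : ℕ) (q : ℝ) : ℝ := 2 * (2 * 4 ^ (m + 1)) ^ q⁻¹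

noncomputable def lastSlopeConst (m : ℕ) (q ν : ℝ) : ℝ :=
  ν⁻¹ * (4 * (ν⁻¹ * (ν⁻¹ * (m * slopeConst m q))) + slopeConst m q)

noncomputable def offsetConst (m : ℕ) (q ν : ℝ) : ℝ :=
  m * slopeConst m q + ν⁻¹ * (lastSlopeConst m q ν + ν⁻¹ * (m * slopeConst m q)) + 1

namespace EllipticCoeffs

variable {m : ℕ} {ν q r M : ℝ} {a : ℝ → ℝ} {b : Fin m → ℝ → ℝ} {ℓ₀ ℓd : ℝ} {ℓ : Fin m → ℝ}

lemma abs_coeff_le (hc : EllipticCoeffs ν a b) (hq₀ : 0 < q) (hq₁ : q ≤ 1) (hr : 0 < r)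
    (hM : 0 ≤ M) (havg : ⨍ x in ball 0 r, |layerAffine a b ℓ₀ ℓd ℓ x| ^ q ≤ (r * M) ^ q)
    (β : Fin m) : |ℓ β| ≤ slopeConst m q * M := by
  have key := le_add_of_setAverage_ball_rpow_le (coordReflection β.castSucc)
    (hc.continuous_layerAffine ℓ₀ ℓd ℓ) hq₀ hq₁ hr (by positivity) havg
    (c := EuclideanSpace.single β.castSucc (r / 2)) (by simp [abs_of_pos hr])
    (K := |ℓ β| * (r / 2)) (D := 0) fun x hx ↦ by
      have hxβ := apply_mem_Ioo_of_mem_ball_single hx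
      rw [layerAffine_sub_coordReflection_castSucc, add_zero, abs_mul, abs_mul, abs_two]
      nlinarith [abs_nonneg (ℓ β), le_abs_self (x β.castSucc), hxβ.1]
  rw [finrank_euclideanSpace_fin] at key
  exact le_of_mul_le_mul_right (by rw [slopeConst]; linarith) hr

lemma sum_abs_coeff_le (hc : EllipticCoeffs ν a b) (hq₀ : 0 < q) (hq₁ : q ≤ 1) (hr : 0 < r)
    (hM : 0 ≤ M) (havg : ⨍ x in ball 0 r, |layerAffine a b ℓ₀ ℓd ℓ x| ^ q ≤ (r * M) ^ q) :
    ∑ β, |ℓ β| ≤ m * (slopeConst m q * M) :=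
  (Finset.sum_le_sum fun β _ ↦ hc.abs_coeff_le hq₀ hq₁ hr hM havg β).trans_eq (by simp)

lemma mul_abs_coeff_last_le (hc : EllipticCoeffs ν a b) (hq₀ : 0 < q) (hq₁ : q ≤ 1)
    (hr : 0 < r) (hM : 0 ≤ M)
    (havg : ⨍ x in ball 0 r, |layerAffine a b ℓ₀ ℓd ℓ x| ^ q ≤ (r * M) ^ q) :
    ν * |ℓd| ≤ 4 * (ν⁻¹ * (ν⁻¹ * ∑ β, |ℓ β|)) + slopeConst m q * M := by
  set V := ν⁻¹ * (ν⁻¹ * ∑ β, |ℓ β|)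
  have hV : 0 ≤ V := (abs_nonneg _).trans (hc.abs_inv_a_mul_sum_le ℓ 0)
  have key := le_add_of_setAverage_ball_rpow_le (coordReflection (Fin.last m))
    (hc.continuous_layerAffine ℓ₀ ℓd ℓ) hq₀ hq₁ hr (by positivity) havg
    (c := EuclideanSpace.single (Fin.last m) (r / 2)) (by simp [abs_of_pos hr])
    (K := r / 2 * (ν * |ℓd|)) (D := 2 * r * V) fun x hx ↦ by
      have ht := apply_mem_Ioo_of_mem_ball_single hx
      have h := hc.sub_mul_abs_le_abs_integral_layerSlope ℓd ℓ
        (neg_le_self (by linarith [ht.1] : 0 ≤ x (Fin.last m)))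
      rw [hc.layerAffine_sub_coordReflection_last]
      have h₁ : r / 2 * (ν * |ℓd|) ≤ (x (Fin.last m) - -x (Fin.last m)) * (ν * |ℓd|) :=
        mul_le_mul_of_nonneg_right (by linarith [ht.1]) (by have := hc.pos; positivity)
      have h₂ : (x (Fin.last m) - -x (Fin.last m)) * V ≤ 2 * r * V :=
        mul_le_mul_of_nonneg_right (by linarith [ht.2]) hV
      linarith
  rw [finrank_euclideanSpace_fin] at key
  exact le_of_mul_le_mul_right (by rw [slopeConst]; linarith) hr

lemma abs_coeff_last_le (hc : EllipticCoeffs ν a b) (hq₀ : 0 < q) (hq₁ : q ≤ 1) (hr : 0 < r)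
    (hM : 0 ≤ M) (havg : ⨍ x in ball 0 r, |layerAffine a b ℓ₀ ℓd ℓ x| ^ q ≤ (r * M) ^ q) :
    |ℓd| ≤ lastSlopeConst m q ν * M := by
  have := hc.pos
  calc |ℓd| = ν⁻¹ * (ν * |ℓd|) := by field_simp
    _ ≤ ν⁻¹ * (4 * (ν⁻¹ * (ν⁻¹ * (m * (slopeConst m q * M)))) + slopeConst m q * M) := by
      gcongr
      refine (hc.mul_abs_coeff_last_le hq₀ hq₁ hr hM havg).trans ?_
      gcongr
      exact hc.sum_abs_coeff_le hq₀ hq₁ hr hM havg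
    _ = lastSlopeConst m q ν * M := by rw [lastSlopeConst]; ring

lemma abs_offset_le (hc : EllipticCoeffs ν a b) (hq₀ : 0 < q) (hq₁ : q ≤ 1) (hr : 0 < r)
    (hM : 0 ≤ M) (havg : ⨍ x in ball 0 r, |layerAffine a b ℓ₀ ℓd ℓ x| ^ q ≤ (r * M) ^ q) :
    |ℓ₀| ≤ offsetConst m q ν * (r * M) := by
  set W := ∑ β, |ℓ β| + ν⁻¹ * (|ℓd| + ν⁻¹ * ∑ β, |ℓ β|)
  have := hc.pos
  have key := le_add_of_setAverage_rpow_le measurableSet_ball (measure_ball_pos _ _ hr).ne'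
    measure_ball_lt_top.ne hq₀ (by positivity)
    ((hc.continuous_layerAffine ℓ₀ ℓd ℓ).integrableOn_ball_abs_rpow hq₀.le 0 r)
    (D := r * W) (fun x hx ↦ (hc.abs_le_abs_layerAffine_add ℓ₀ ℓd ℓ x).trans
      (by gcongr; exact (mem_ball_zero_iff.1 hx).le)) havg
  have hS := hc.sum_abs_coeff_le hq₀ hq₁ hr hM havg
  have hd := hc.abs_coeff_last_le hq₀ hq₁ hr hM havg
  calc |ℓ₀| ≤ r * (W + M) := by linarith
    _ ≤ r * (m * (slopeConst m q * M) +
        ν⁻¹ * (lastSlopeConst m q ν * M + ν⁻¹ * (m * (slopeConst m q * M))) + M) := by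
      simp only [W]
      gcongr
    _ = offsetConst m q ν * (r * M) := by rw [offsetConst]; ring

end EllipticCoeffs

theorem stmt5_general (m : ℕ) (q ν δ : ℝ) (hq : q ∈ Set.Ioo (0:ℝ) 1) (hν : ν ∈ Set.Ioc (0:ℝ) 1) :
    ∃ N : ℝ, ∀ (a : ℝ → ℝ) (b : Fin m → ℝ → ℝ) (ℓ₀ ℓd r C₀ : ℝ) (ℓ : Fin m → ℝ),
      Measurable a → (∀ β, Measurable (b β)) →
      (∀ s, ν ≤ a s ∧ a s ≤ ν⁻¹) → (∀ β s, |b β s| ≤ ν⁻¹) →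
      0 < r → 0 ≤ C₀ →
      (⨍ x in Metric.ball (0 : EuclideanSpace ℝ (Fin (m+1))) r,
          |ℓ₀ + (∑ β : Fin m, ℓ β * x β.castSucc) +
            ∫ s in (0:ℝ)..(x (Fin.last m)),
              (a s)⁻¹ * (ℓd - ∑ β : Fin m, b β s * ℓ β)| ^ q)
        ≤ C₀ ^ q * r ^ (q * (1 + δ)) →
      |ℓ₀| ≤ N * C₀ * r ^ (1 + δ) ∧ (∀ β, |ℓ β| ≤ N * C₀ * r ^ δ) ∧ |ℓd| ≤ N * C₀ * r ^ δ := by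
  obtain ⟨hq₀, hq₁⟩ := hq
  refine ⟨max (offsetConst m q ν) (max (slopeConst m q) (lastSlopeConst m q ν)),
    fun a b ℓ₀ ℓd r C₀ ℓ ha hb haν hbν hr hC₀ havg ↦ ?_⟩
  have hc : EllipticCoeffs ν a b := ⟨hν.1, ha, hb, fun s ↦ (haν s).1, fun s ↦ (haν s).2, hbν⟩
  set M := C₀ * r ^ δ
  have hM : 0 ≤ M := by positivity
  have hrM : r * M = C₀ * r ^ (1 + δ) := by rw [Real.rpow_add hr, Real.rpow_one]; ring
  have hp : ⨍ x in ball 0 r, |layerAffine a b ℓ₀ ℓd ℓ x| ^ q ≤ (r * M) ^ q := by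
    rwa [hrM, Real.mul_rpow hC₀ (by positivity), ← Real.rpow_mul hr.le, mul_comm (1 + δ)]
  rw [mul_assoc _ C₀, ← hrM, mul_assoc _ C₀]
  refine ⟨(hc.abs_offset_le hq₀ hq₁.le hr hM hp).trans ?_,
    fun β ↦ (hc.abs_coeff_le hq₀ hq₁.le hr hM hp β).trans ?_,
    (hc.abs_coeff_last_le hq₀ hq₁.le hr hM hp).trans ?_⟩ <;> gcongr
  · exact le_max_left _ _
  · exact (le_max_left _ _).trans (le_max_right _ _)
  · exact (le_max_right _ _).trans (le_max_right _ _)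

/-- Lemma 3.13: coefficient bounds for a function which is affine in x' and has a
coefficient-modulated linear profile in x^d, from a smallness bound on its L^q average. -/
theorem stmt5 (m : ℕ) (q ν δ : ℝ) (hq : q ∈ Set.Ioo (0:ℝ) 1) (hν : ν ∈ Set.Ioc (0:ℝ) 1)
    (hδ : 0 < δ) :
    ∃ N : ℝ, ∀ (a : ℝ → ℝ) (b : Fin m → ℝ → ℝ) (ℓ₀ ℓd r C₀ : ℝ) (ℓ : Fin m → ℝ),
      Measurable a → (∀ β, Measurable (b β)) →
      (∀ s, ν ≤ a s ∧ a s ≤ ν⁻¹) → (∀ β s, |b β s| ≤ ν⁻¹) →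
      0 < r → 0 ≤ C₀ →
      (⨍ x in Metric.ball (0 : EuclideanSpace ℝ (Fin (m+1))) r,
          |ℓ₀ + (∑ β : Fin m, ℓ β * x β.castSucc) +
            ∫ s in (0:ℝ)..(x (Fin.last m)),
              (a s)⁻¹ * (ℓd - ∑ β : Fin m, b β s * ℓ β)| ^ q)
        ≤ C₀ ^ q * r ^ (q * (1 + δ)) →
      |ℓ₀| ≤ N * C₀ * r ^ (1 + δ) ∧ (∀ β, |ℓ β| ≤ N * C₀ * r ^ δ) ∧ |ℓd| ≤ N * C₀ * r ^ δ :=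
  stmt5_general m q ν δ hq hν
end

section
/- Let ω : (0,1] → [0, ∞) be increasing with ω satisfying the Dini condition, let κ ∈ (0,1), γ ∈ (0,1), and define ω̃(t) := ∑_{i=1}^∞ κ^{iγ}·(ω(κ^{-i}t)·1_{κ^{-i}t ≤ 1} + ω(1)·1_{κ^{-i}t > 1}). Then ω̃ satisfies the doubling-type property: there exist constants c₁, c₂ > 0 (depending on κ, γ, ω) such that c₁·ω̃(t) ≤ ω̃(s) ≤ c₂·ω̃(t) whenever κ·t ≤ s ≤ t ≤ 1. -/
open MeasureTheory Set Filter

/-- The derived modulus ω̃ of (4.7) satisfies the doubling-type property: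
c₁ ω̃(t) ≤ ω̃(s) ≤ c₂ ω̃(t) whenever κ t ≤ s ≤ t ≤ 1. -/
theorem stmt17 (ω : ℝ → ℝ) (hmono : MonotoneOn ω (Set.Ioc 0 1)) (hωpos : ∀ t, 0 ≤ ω t)
    (hDini : IntegrableOn (fun s => ω s / s) (Set.Ioo 0 1))
    (κ γ : ℝ) (hκ : κ ∈ Set.Ioo (0:ℝ) 1) (hγ : γ ∈ Set.Ioo (0:ℝ) 1) :
    ∃ c₁ c₂ : ℝ, 0 < c₁ ∧ 0 < c₂ ∧
      ∀ s t : ℝ, 0 < t → t ≤ 1 → κ * t ≤ s → s ≤ t →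
        c₁ * (∑' i : ℕ, κ ^ (((i:ℝ) + 1) * γ) *
            (if κ ^ (-((i:ℝ) + 1)) * t ≤ 1 then ω (κ ^ (-((i:ℝ) + 1)) * t) else ω 1))
          ≤ (∑' i : ℕ, κ ^ (((i:ℝ) + 1) * γ) *
            (if κ ^ (-((i:ℝ) + 1)) * s ≤ 1 then ω (κ ^ (-((i:ℝ) + 1)) * s) else ω 1)) ∧
        (∑' i : ℕ, κ ^ (((i:ℝ) + 1) * γ) *
            (if κ ^ (-((i:ℝ) + 1)) * s ≤ 1 then ω (κ ^ (-((i:ℝ) + 1)) * s) else ω 1))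
          ≤ c₂ * (∑' i : ℕ, κ ^ (((i:ℝ) + 1) * γ) *
            (if κ ^ (-((i:ℝ) + 1)) * t ≤ 1 then ω (κ ^ (-((i:ℝ) + 1)) * t) else ω 1)) := by
  obtain ⟨hκ0, hκ1⟩ := hκ
  obtain ⟨hγ0, hγ1⟩ := hγ
  set f : ℝ → ℝ := fun x => if x ≤ 1 then ω x else ω 1 with hf
  set c : ℝ := κ ^ γ with hcdef
  have hc0 : 0 < c := Real.rpow_pos_of_pos hκ0 γ
  have hc1 : c < 1 := Real.rpow_lt_one hκ0.le hκ1 hγ0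
  have hfnonneg : ∀ x, 0 ≤ f x := fun x => by
    simp only [hf]; split <;> exact hωpos _
  have hfle : ∀ x, 0 < x → f x ≤ ω 1 := by
    intro x hx
    simp only [hf]
    split_ifs with h
    · exact hmono ⟨hx, h⟩ ⟨one_pos, le_refl 1⟩ h
    · exact le_refl _
  have hfmono : ∀ x y, 0 < x → x ≤ y → f x ≤ f y := by
    intro x y hx hxy
    simp only [hf]
    split_ifs with h1 h2 h2
    · exact hmono ⟨hx, h1⟩ ⟨lt_of_lt_of_le hx hxy, h2⟩ hxy
    · exact hmono ⟨hx, h1⟩ ⟨one_pos, le_refl 1⟩ h1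
    · exact absurd (le_trans hxy h2) h1
    · exact le_refl _
  -- rewrite the tsum in the statement to natural powers
  have key : ∀ u : ℝ,
      (∑' i : ℕ, κ ^ (((i:ℝ) + 1) * γ) *
        (if κ ^ (-((i:ℝ) + 1)) * u ≤ 1 then ω (κ ^ (-((i:ℝ) + 1)) * u) else ω 1))
      = ∑' i : ℕ, c ^ (i + 1) * f ((κ ^ (i + 1))⁻¹ * u) := by
    intro u
    refine tsum_congr fun i => ?_
    have hcast : ((i:ℝ) + 1) = ((i + 1 : ℕ) : ℝ) := by push_cast; ring
    have h1 : κ ^ (((i:ℝ) + 1) * γ) = c ^ (i + 1) := by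
      rw [mul_comm, Real.rpow_mul hκ0.le, hcdef, hcast, Real.rpow_natCast]
    have h2 : κ ^ (-((i:ℝ) + 1)) = (κ ^ (i + 1))⁻¹ := by
      rw [Real.rpow_neg hκ0.le, hcast, Real.rpow_natCast]
    rw [h1, h2]
  -- summability
  have hsum : ∀ (g : ℕ → ℝ), (∀ i, 0 ≤ g i) → (∀ i, g i ≤ ω 1) →
      Summable (fun i : ℕ => c ^ (i + 1) * g i) := by
    intro g hg0 hg1
    refine Summable.of_nonneg_of_le
      (fun i => mul_nonneg (pow_nonneg hc0.le _) (hg0 i))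
      (fun i => mul_le_mul_of_nonneg_left (hg1 i) (pow_nonneg hc0.le _)) ?_
    have : Summable (fun i : ℕ => c * c ^ i * ω 1) :=
      (((summable_geometric_of_lt_one hc0.le hc1).mul_left c).mul_right (ω 1))
    exact this.congr fun i => by rw [pow_succ]; ring
  have hargpos : ∀ (i : ℕ) (u : ℝ), 0 < u → 0 < (κ ^ i)⁻¹ * u := fun i u hu =>
    mul_pos (inv_pos.mpr (pow_pos hκ0 i)) hu
  have hsumG : ∀ u : ℝ, 0 < u → Summable (fun i : ℕ => c ^ (i + 1) * f ((κ ^ (i + 1))⁻¹ * u)) := by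
    intro u hu
    exact hsum _ (fun i => hfnonneg _) (fun i => hfle _ (hargpos _ _ hu))
  -- monotonicity of ω̃
  have hWmono : ∀ a b : ℝ, 0 < a → a ≤ b →
      (∑' i : ℕ, c ^ (i + 1) * f ((κ ^ (i + 1))⁻¹ * a))
      ≤ ∑' i : ℕ, c ^ (i + 1) * f ((κ ^ (i + 1))⁻¹ * b) := by
    intro a b ha hab
    refine Summable.tsum_le_tsum (fun i => ?_) (hsumG a ha) (hsumG b (lt_of_lt_of_le ha hab))
    refine mul_le_mul_of_nonneg_left ?_ (pow_nonneg hc0.le _)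
    exact hfmono _ _ (hargpos _ _ ha)
      (mul_le_mul_of_nonneg_left hab (inv_pos.mpr (pow_pos hκ0 _)).le)
  refine ⟨c, 1, hc0, one_pos, fun s t ht ht1 hκts hst => ?_⟩
  have hs : 0 < s := lt_of_lt_of_le (mul_pos hκ0 ht) hκts
  rw [key s, key t]
  constructor
  · -- lower bound: c * ω̃(t) ≤ ω̃(κ t) ≤ ω̃(s)
    set H : ℕ → ℝ := fun i => c ^ i * f ((κ ^ i)⁻¹ * t) with hH
    have hHsum : Summable H := by
      have := hsum (fun i => f ((κ ^ (i+1))⁻¹ * t)) (fun i => hfnonneg _)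
        (fun i => hfle _ (hargpos _ _ ht))
      have h0 : Summable (fun i : ℕ => H (i + 1)) := by
        refine this.congr fun i => ?_
        simp only [hH]
      exact (summable_nat_add_iff 1).mp h0
    have hshift : ∀ i : ℕ, c ^ (i + 1) * f ((κ ^ (i + 1))⁻¹ * (κ * t)) = c * H i := by
      intro i
      have harg : (κ ^ (i + 1))⁻¹ * (κ * t) = (κ ^ i)⁻¹ * t := by
        rw [pow_succ, mul_inv]
        field_simp
      rw [harg, hH, pow_succ]
      ring
    have hGt : ∀ i : ℕ, c ^ (i + 1) * f ((κ ^ (i + 1))⁻¹ * t) = H (i + 1) := fun i => rfl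
    calc c * (∑' i : ℕ, c ^ (i + 1) * f ((κ ^ (i + 1))⁻¹ * t))
        = c * ∑' i : ℕ, H (i + 1) := rfl
      _ ≤ c * ∑' i : ℕ, H i := by
          refine mul_le_mul_of_nonneg_left ?_ hc0.le
          rw [Summable.tsum_eq_zero_add hHsum]
          have : 0 ≤ H 0 := mul_nonneg (pow_nonneg hc0.le _) (hfnonneg _)
          linarith
      _ = ∑' i : ℕ, c * H i := (tsum_mul_left).symm
      _ = ∑' i : ℕ, c ^ (i + 1) * f ((κ ^ (i + 1))⁻¹ * (κ * t)) := by
          exact (tsum_congr hshift).symm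
      _ ≤ ∑' i : ℕ, c ^ (i + 1) * f ((κ ^ (i + 1))⁻¹ * s) :=
          hWmono _ _ (mul_pos hκ0 ht) hκts
  · rw [one_mul]
    exact hWmono s t hs hst
end
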